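/- arXiv:1911.01067 — 4 statements merged into one kernel-verified Lean document; each statement's English description precedes it below -/
import Mathlib

section
/- For any positive reals p, q in (0,1), the KL divergence between Bernoulli(p) and Bernoulli(q), defined as q*log(q/p) + (1-q)*log((1-q)/(1-p)), is at most |p - q|^2 / min{p, q, 1-p, 1-q}. -/
/-!
Writing `f(a) = a log(a/b) - (a - b)`, we have `f(b) = f'(b) = 0` and `f'' = 1/a`, so
`f(a) ≤ (a - b)² / (2 min(a, b))`. Applied to `(q, p)` and `(1 - q, 1 - p)` the linear terms cancel,
and each quadratic term is at most `(p - q)² / (2 min{p, q, 1 - p, 1 - q})`.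
The two cases `a ≥ b` and `a ≤ b` of the bound on `f` come from `log t ≤ sinh (log t)` and from
`2 (s - 1) / (s + 1) ≤ log s` for `t, s ≥ 1`.
-/

open Real

lemma Real.log_le_sub_inv_div_two {t : ℝ} (ht : 1 ≤ t) : log t ≤ (t - t⁻¹) / 2 := by
  rw [← sinh_log (by linarith)]
  exact self_le_sinh_iff.2 (log_nonneg ht)

lemma Real.two_mul_sub_one_div_add_one_le_log {s : ℝ} (hs : 1 ≤ s) :
    2 * (s - 1) / (s + 1) ≤ log s := by
  have h := le_log_one_add_of_nonneg (sub_nonneg.2 hs)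
  rwa [show s - 1 + 2 = s + 1 by ring, add_sub_cancel] at h

lemma Real.mul_log_div_le_of_le {a b : ℝ} (hb : 0 < b) (hba : b ≤ a) :
    a * log (a / b) ≤ (a - b) + (a - b) ^ 2 / (2 * b) := by
  have ha : 0 < a := hb.trans_le hba
  calc a * log (a / b) ≤ a * ((a / b - (a / b)⁻¹) / 2) :=
        mul_le_mul_of_nonneg_left (log_le_sub_inv_div_two ((one_le_div hb).2 hba)) ha.le
    _ = (a - b) + (a - b) ^ 2 / (2 * b) := by field_simp; ring

lemma Real.mul_log_div_le_of_ge {a b : ℝ} (ha : 0 < a) (hab : a ≤ b) :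
    a * log (a / b) ≤ (a - b) + (a - b) ^ 2 / (2 * a) := by
  have hlog := two_mul_sub_one_div_add_one_le_log ((one_le_div ha).2 hab)
  rw [← neg_neg (log (b / a)), ← log_inv, inv_div] at hlog
  have hsum : 0 < b + a := by linarith
  have hd : 0 ≤ (b - a) ^ 3 / (2 * a * (b + a)) :=
    div_nonneg (pow_nonneg (sub_nonneg.2 hab) 3) (by positivity)
  calc a * log (a / b) ≤ a * -(2 * (b / a - 1) / (b / a + 1)) :=
        mul_le_mul_of_nonneg_left (le_neg.1 hlog) ha.le
    _ = (a - b) + (a - b) ^ 2 / (2 * a) - (b - a) ^ 3 / (2 * a * (b + a)) := by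
        rw [div_sub_one ha.ne', div_add_one ha.ne']
        field_simp
        ring
    _ ≤ (a - b) + (a - b) ^ 2 / (2 * a) := sub_le_self _ hd

lemma Real.mul_log_div_le_of_le_min {a b m : ℝ} (hm : 0 < m) (hmab : m ≤ min a b) :
    a * log (a / b) ≤ (a - b) + (a - b) ^ 2 / (2 * m) := by
  have hma := hmab.trans (min_le_left a b)
  have hmb := hmab.trans (min_le_right a b)
  rcases le_total b a with hba | hab
  · calc _ ≤ (a - b) + (a - b) ^ 2 / (2 * b) := mul_log_div_le_of_le (hm.trans_le hmb) hba
      _ ≤ _ := by gcongr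
  · calc _ ≤ (a - b) + (a - b) ^ 2 / (2 * a) := mul_log_div_le_of_ge (hm.trans_le hma) hab
      _ ≤ _ := by gcongr

/-- KL divergence bound between Bernoulli distributions (paper's convention):
`D_KL(Ber(p) ‖ Ber(q)) = q log(q/p) + (1-q) log((1-q)/(1-p)) ≤ |p-q|² / min{p,q,1-p,1-q}`. -/
theorem bernoulli_kl_le (p q : ℝ) (hp0 : 0 < p) (hp1 : p < 1) (hq0 : 0 < q) (hq1 : q < 1) :
    q * Real.log (q / p) + (1 - q) * Real.log ((1 - q) / (1 - p)) ≤
      |p - q| ^ 2 / min (min p q) (min (1 - p) (1 - q)) := by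
  set m := min (min p q) (min (1 - p) (1 - q))
  have hm : 0 < m := lt_min (lt_min hp0 hq0) (lt_min (by linarith) (by linarith))
  have h₁ := mul_log_div_le_of_le_min hm (a := q) (b := p)
    (le_min (by simp [m]) (by simp [m]))
  have h₂ := mul_log_div_le_of_le_min hm (a := 1 - q) (b := 1 - p)
    (le_min (by simp [m]) (by simp [m]))
  calc _ ≤ (q - p + (q - p) ^ 2 / (2 * m)) + (1 - q - (1 - p) + (1 - q - (1 - p)) ^ 2 / (2 * m)) :=
        add_le_add h₁ h₂
    _ = |p - q| ^ 2 / m := by rw [sq_abs]; field_simp; ring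
end

section
/- In a sequential process over T periods with K actions, define stopping times τ_1 < τ_2 < ... where τ_j is the first time all K actions have been chosen in the interval [τ_{j-1}, τ_j] (with τ_0 = 1). If τ_m ≤ T (so τ_1,...,τ_m are all finite and at most T), then the number of switches occurring in [1, τ_m] is at least m(K-1). -/
open Finset

lemma switch_in_interval (K : ℕ) (z : ℕ → Fin K) (a b : ℕ) (ha : 1 ≤ a)
    (hc : ∀ k : Fin K, ∃ t, a ≤ t ∧ t ≤ b ∧ z t = k) :
    K - 1 ≤ ((Finset.Icc a (b - 1)).filter (fun t => z (t + 1) ≠ z t)).card := by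
  rcases Nat.eq_zero_or_pos K with hK0 | hK
  · simp [hK0]
  set f : Fin K → ℕ := fun k => Nat.find (hc k) with hf
  have hfspec : ∀ k, a ≤ f k ∧ f k ≤ b ∧ z (f k) = k := fun k => Nat.find_spec (hc k)
  have hfmin : ∀ k t, t < f k → ¬(a ≤ t ∧ t ≤ b ∧ z t = k) :=
    fun k t ht => Nat.find_min (hc k) ht
  have hfa : ∀ k : Fin K, k ≠ z a → a < f k := by
    intro k hk
    obtain ⟨h1, h2, h3⟩ := hfspec k
    rcases lt_or_eq_of_le h1 with h | h
    · exact h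
    · exact absurd (h ▸ h3).symm hk
  have key : ∀ k : Fin K, k ≠ z a →
      (f k - 1) ∈ (Finset.Icc a (b - 1)).filter (fun t => z (t + 1) ≠ z t) := by
    intro k hk
    obtain ⟨h1, h2, h3⟩ := hfspec k
    have hfa' := hfa k hk
    simp only [mem_filter, mem_Icc]
    refine ⟨⟨by omega, by omega⟩, ?_⟩
    have h4 : f k - 1 + 1 = f k := by omega
    rw [h4, h3]
    intro heq
    exact hfmin k (f k - 1) (by omega) ⟨by omega, by omega, heq.symm⟩
  have hinj : Set.InjOn (fun k => f k - 1) ↑(Finset.univ.erase (z a)) := by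
    intro k1 h1 k2 h2 heq
    simp only [Finset.coe_erase, Set.mem_diff, Set.mem_singleton_iff] at h1 h2
    have hf2 := hfa k2 h2.2
    have hf1' := hfa k1 h1.2
    simp only at heq
    have heq' : f k1 = f k2 := by omega
    calc k1 = z (f k1) := (hfspec k1).2.2.symm
      _ = z (f k2) := by rw [heq']
      _ = k2 := (hfspec k2).2.2
  have hcard := Finset.card_le_card_of_injOn (fun k => f k - 1)
    (fun k hk => key k (Finset.ne_of_mem_erase hk)) hinj
  rwa [Finset.card_erase_of_mem (Finset.mem_univ _), Finset.card_univ, Fintype.card_fin] at hcard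

/-- If `τ_1 < ⋯ < τ_m` are the successive cover times (each interval `[τ_{j-1}, τ_j]`
contains every one of the `K` actions, `τ_0 = 1`) and `τ_m ≤ T`, then the number of
switches in `[1, τ_m]` is at least `m(K-1)`. -/
theorem switches_ge_cover (K m T : ℕ) (hK : 1 ≤ K) (z : ℕ → Fin K) (τ : ℕ → ℕ)
    (hτ0 : τ 0 = 1) (hmono : StrictMono τ) (hT : τ m ≤ T)
    (hcover : ∀ j, 1 ≤ j → j ≤ m → ∀ k : Fin K,
      ∃ t, τ (j - 1) ≤ t ∧ t ≤ τ j ∧ z t = k) :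
    m * (K - 1) ≤ ((Finset.Icc 1 (τ m - 1)).filter (fun t => z (t + 1) ≠ z t)).card := by
  clear hT
  induction m with
  | zero => simp
  | succ m ih =>
    have hA := ih (fun j hj1 hj2 => hcover j hj1 (le_trans hj2 (Nat.le_succ m)))
    have hτm1 : 1 ≤ τ m := hτ0 ▸ hmono.monotone (Nat.zero_le m)
    have hB := switch_in_interval K z (τ m) (τ (m + 1)) hτm1
      (by simpa using hcover (m + 1) (by omega) le_rfl)
    set A := (Finset.Icc 1 (τ m - 1)).filter (fun t => z (t + 1) ≠ z t) with hAdef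
    set B := (Finset.Icc (τ m) (τ (m + 1) - 1)).filter (fun t => z (t + 1) ≠ z t) with hBdef
    have hdisj : Disjoint A B := by
      rw [Finset.disjoint_left]
      intro t htA htB
      simp only [hAdef, hBdef, mem_filter, mem_Icc] at htA htB
      omega
    have hττ : τ m ≤ τ (m + 1) := le_of_lt (hmono (Nat.lt_succ_self m))
    have hsub : A ∪ B ⊆ (Finset.Icc 1 (τ (m + 1) - 1)).filter (fun t => z (t + 1) ≠ z t) := by
      intro t ht
      rcases mem_union.mp ht with h | h <;>
        simp only [hAdef, hBdef, mem_filter, mem_Icc] at h ⊢ <;>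
        exact ⟨⟨by omega, by omega⟩, h.2⟩
    calc (m + 1) * (K - 1) = m * (K - 1) + (K - 1) := by ring
      _ ≤ A.card + B.card := Nat.add_le_add hA hB
      _ = (A ∪ B).card := (Finset.card_union_of_disjoint hdisj).symm
      _ ≤ _ := Finset.card_le_card hsub
end

section
/- Consider the linear program over x ∈ R_{≥0}^{d+1}: maximize Σ_{k=1}^{d+1} (1/2) x_k + (η/(d+1)) x_1 − (η/(d+1)) x_{d+1}, subject to Σ_k (1/2) x_k + η(x_i − x_{i+1}) ≤ T/2 for each i ∈ [d], and Σ_k x_k ≤ T, where 0 ≤ η ≤ 1/2. Then x_1 = x_2 = ... = x_{d+1} = T/(d+1) is an optimal solution, and the optimal value equals T/2. -/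
lemma telescope (d : ℕ) (x : Fin (d + 1) → ℝ) :
    ∑ i : Fin d, (x i.castSucc - x i.succ) = x 0 - x (Fin.last d) := by
  induction d with
  | zero => simp
  | succ n ih =>
    rw [Fin.sum_univ_castSucc]
    have := ih (x ∘ Fin.castSucc)
    simp only [Function.comp] at this
    simp only [Fin.succ_castSucc] at this ⊢
    rw [show (∑ i : Fin n, (x i.castSucc.castSucc - x i.succ.castSucc)) = x 0 - x (Fin.last n).castSucc from by simpa using this]
    simp [Fin.succ_last]

/-- Objective of the lower-bound DLP. -/
noncomputable def lpObj (d : ℕ) (η : ℝ) (x : Fin (d + 1) → ℝ) : ℝ :=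
  (∑ k, (1 / 2 : ℝ) * x k) + (η / ((d : ℝ) + 1)) * x 0 - (η / ((d : ℝ) + 1)) * x (Fin.last d)

/-- Feasible region of the lower-bound DLP. -/
def lpFeas (d : ℕ) (T η : ℝ) (x : Fin (d + 1) → ℝ) : Prop :=
  (∀ k, 0 ≤ x k) ∧
    (∀ i : Fin d, (∑ k, (1 / 2 : ℝ) * x k) + η * (x i.castSucc - x i.succ) ≤ T / 2) ∧
    (∑ k, x k) ≤ T

/-- The uniform solution `x_k = T/(d+1)` is optimal for the lower-bound DLP, with value `T/2`. -/
theorem lp_uniform_optimal (d : ℕ) (hd : 1 ≤ d) (T η : ℝ) (hT : 0 < T)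
    (hη0 : 0 ≤ η) (hη1 : η ≤ 1 / 2) :
    lpFeas d T η (fun _ => T / ((d : ℝ) + 1)) ∧
      lpObj d η (fun _ => T / ((d : ℝ) + 1)) = T / 2 ∧
      ∀ x, lpFeas d T η x → lpObj d η x ≤ T / 2 := by
  have hd1 : (0:ℝ) < (d : ℝ) + 1 := by positivity
  have hdR : (1:ℝ) ≤ (d : ℝ) := by exact_mod_cast hd
  have hsum : (∑ _k : Fin (d+1), T / ((d : ℝ) + 1)) = T := by
    rw [Finset.sum_const]
    simp
    field_simp
  refine ⟨⟨fun k => by positivity, fun i => ?_, by rw [hsum]⟩, ?_, ?_⟩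
  · have : (∑ k : Fin (d+1), (1/2:ℝ) * (T / ((d : ℝ) + 1))) = T / 2 := by
      rw [← Finset.mul_sum, hsum]; ring
    simp only [this]
    simp
  · unfold lpObj
    rw [← Finset.mul_sum, hsum]
    ring
  · rintro x ⟨hx0, hres, htime⟩
    set S := ∑ k, (1/2:ℝ) * x k with hS
    have hSval : S = (∑ k, x k) / 2 := by
      rw [hS, ← Finset.mul_sum]; ring
    have hShalf : S ≤ T / 2 := by
      rw [hSval]; linarith
    set D := x 0 - x (Fin.last d) with hD
    unfold lpObj
    have heq : (∑ k, (1/2:ℝ) * x k) + (η / ((d:ℝ)+1)) * x 0 - (η / ((d:ℝ)+1)) * x (Fin.last d)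
        = S + (η / ((d:ℝ)+1)) * D := by rw [hS, hD]; ring
    rw [heq]
    rcases le_or_gt D 0 with hDle | hDpos
    · have h1 : (η / ((d:ℝ)+1)) * D ≤ 0 :=
        mul_nonpos_of_nonneg_of_nonpos (by positivity) hDle
      linarith
    · -- sum the resource constraints
      have hsumc : ∑ i : Fin d, (S + η * (x i.castSucc - x i.succ)) ≤ ∑ _i : Fin d, T / 2 :=
        Finset.sum_le_sum (fun i _ => hres i)
      rw [Finset.sum_add_distrib, ← Finset.mul_sum, telescope, Finset.sum_const, Finset.sum_const] at hsumc
      simp only [Finset.card_univ, Fintype.card_fin, nsmul_eq_mul] at hsumc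
      -- hsumc : d * S + η * D ≤ d * (T/2)
      have hkey : (d:ℝ) * S + η * D ≤ (d:ℝ) * (T / 2) := by
        rw [hD]; exact hsumc
      have hηD : 0 ≤ η * D := mul_nonneg hη0 hDpos.le
      have heq2 : (η / ((d:ℝ)+1)) * D = (η * D) / ((d:ℝ)+1) := by ring
      rw [heq2]
      have h2 : (η * D) / ((d:ℝ)+1) ≤ T / 2 - S := by
        rw [div_le_iff₀ hd1]
        nlinarith
      linarith
end

section
/- Consider the linear program over x ∈ R_{≥0}^{d+1} with the objective Σ_k (1/2) x_k + (η/(d+1)) x_1 − (η/(d+1)) x_{d+1}, constraints Σ_k (1/2) x_k + η(x_i − x_{i+1}) ≤ T/2 for i ∈ [d], Σ_k x_k ≤ T, and the additional constraint x_1 = 0. Then the optimal value is (T/2)·(1 − 2η/(d(d+1))), attained at x_2 = ... = x_{d+1} = T/d. -/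
open Finset

theorem Fin.sum_val_cast_mul_two {R : Type*} [CommRing R] (n : ℕ) :
    (∑ i : Fin n, ((i : ℕ) : R)) * 2 = n * (n - 1) := by
  induction n with
  | zero => simp
  | succ n ih =>
    rw [Fin.sum_univ_castSucc, add_mul]
    simp only [Fin.val_castSucc, Fin.val_last, ih]
    push_cast
    ring

theorem Fin.sum_val_mul_sub_succ {R : Type*} [CommRing R] (n : ℕ) (x : Fin (n + 1) → R) :
    ∑ i : Fin n, ((i : ℕ) : R) * (x i.castSucc - x i.succ) =
      ∑ k, x k - x 0 - n * x (Fin.last n) := by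
  have hcastSucc := Fin.sum_univ_castSucc fun k : Fin (n + 1) => ((k : ℕ) : R) * x k
  have hsucc := Fin.sum_univ_succ fun k : Fin (n + 1) => ((k : ℕ) : R) * x k
  simp only [Fin.val_castSucc, Fin.val_last, Fin.val_succ, Fin.val_zero, Nat.cast_add,
    Nat.cast_one, add_mul, one_mul, sum_add_distrib, Nat.cast_zero, zero_mul, zero_add]
    at hcastSucc hsucc
  rw [Fin.sum_univ_succ x]
  simp only [mul_sub, sum_sub_distrib]
  linear_combination hsucc - hcastSucc

noncomputable def firstZeroPoint (d : ℕ) (T : ℝ) : Fin (d + 1) → ℝ :=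
  fun k => if k = 0 then 0 else T / d

section firstZeroPoint

variable {d : ℕ} {T : ℝ}

theorem sum_firstZeroPoint (hd : d ≠ 0) : ∑ k, firstZeroPoint d T k = T := by
  rw [Fin.sum_univ_succ]
  simp [firstZeroPoint, Fin.succ_ne_zero]
  field_simp

theorem firstZeroPoint_last (hd : d ≠ 0) : firstZeroPoint d T (Fin.last d) = T / d := by
  simp [firstZeroPoint, Fin.ext_iff, hd]

theorem firstZeroPoint_le (hT : 0 ≤ T) (k : Fin (d + 1)) : firstZeroPoint d T k ≤ T / d := by
  unfold firstZeroPoint; split_ifs <;> [positivity; rfl]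

theorem lpFeas_firstZeroPoint (hd : d ≠ 0) (hT : 0 ≤ T) {η : ℝ} (hη : 0 ≤ η) :
    lpFeas d T η (firstZeroPoint d T) := by
  have hnonneg (k) : 0 ≤ firstZeroPoint d T k := by
    unfold firstZeroPoint; split_ifs <;> positivity
  refine ⟨hnonneg, fun i => ?_, (sum_firstZeroPoint hd).le⟩
  have hsucc : firstZeroPoint d T i.succ = T / d := if_neg (Fin.succ_ne_zero i)
  have hrise : firstZeroPoint d T i.castSucc - firstZeroPoint d T i.succ ≤ 0 := by
    linarith [firstZeroPoint_le hT i.castSucc]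
  rw [← mul_sum, sum_firstZeroPoint hd]
  linarith [mul_nonpos_of_nonneg_of_nonpos hη hrise]

theorem lpObj_firstZeroPoint (hd : d ≠ 0) (η : ℝ) :
    lpObj d η (firstZeroPoint d T) = T / 2 * (1 - 2 * η / (d * (d + 1))) := by
  have hd' : (d : ℝ) ≠ 0 := Nat.cast_ne_zero.mpr hd
  rw [lpObj, ← mul_sum, sum_firstZeroPoint hd, firstZeroPoint_last hd]
  simp only [firstZeroPoint, if_pos]
  field_simp
  ring

end firstZeroPoint

theorem lpObj_le_of_first_eq_zero {d : ℕ} (hd : d ≠ 0) {T η : ℝ} (hη : η ≤ 1 / 2)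
    {x : Fin (d + 1) → ℝ}
    (hcon : ∀ i : Fin d, (∑ k, (1 / 2 : ℝ) * x k) + η * (x i.castSucc - x i.succ) ≤ T / 2)
    (hsum : ∑ k, x k ≤ T) (hx0 : x 0 = 0) :
    lpObj d η x ≤ T / 2 * (1 - 2 * η / (d * (d + 1))) := by
  set S := ∑ k, x k
  have hhalf : ∑ k, (1 / 2 : ℝ) * x k = S / 2 := by rw [← mul_sum]; ring
  have hweighted : ∑ i : Fin d, ((i : ℕ) : ℝ) * (S / 2 + η * (x i.castSucc - x i.succ)) ≤
      ∑ i : Fin d, ((i : ℕ) : ℝ) * (T / 2) :=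
    sum_le_sum fun i _ => mul_le_mul_of_nonneg_left (hhalf ▸ hcon i) (Nat.cast_nonneg _)
  simp only [mul_add, sum_add_distrib, mul_left_comm _ η, ← mul_sum, ← sum_mul,
    Fin.sum_val_mul_sub_succ, hx0] at hweighted
  have hgauss := Fin.sum_val_cast_mul_two (R := ℝ) d
  have hd1 : (1 : ℝ) ≤ d := Nat.one_le_cast.mpr (Nat.one_le_iff_ne_zero.mpr hd)
  have hkey : η * (S - d * x (Fin.last d)) ≤ d * (d - 1) / 4 * (T - S) := by
    linear_combination hweighted + (T - S) / 4 * hgauss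
  have hgap : T / 2 * (1 - 2 * η / (d * (d + 1))) - lpObj d η x =
      ((T - S) * (d * (d + 3) - 4 * η) +
          (d * (d - 1) * (T - S) - 4 * η * (S - d * x (Fin.last d)))) / (4 * d * (d + 1)) := by
    rw [lpObj, hhalf, hx0]
    field_simp
    ring
  have hfactor : 0 ≤ (T - S) * (d * (d + 3) - 4 * η) :=
    mul_nonneg (by linarith) (by nlinarith)
  have : 0 ≤ T / 2 * (1 - 2 * η / (d * (d + 1))) - lpObj d η x := by
    rw [hgap]; apply div_nonneg <;> [linarith; positivity]
  linarith

/-- With the additional constraint `x_1 = 0`, the optimal value of the lower-bound DLP is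
`(T/2)(1 - 2η/(d(d+1)))`, attained at `x_2 = ⋯ = x_{d+1} = T/d`. -/
theorem lp_first_zero_optimal (d : ℕ) (hd : 1 ≤ d) (T η : ℝ) (hT : 0 < T)
    (hη0 : 0 < η) (hη1 : η ≤ 1 / 2) :
    lpFeas d T η (fun k => if k = 0 then 0 else T / (d : ℝ)) ∧
      (fun k : Fin (d + 1) => if k = 0 then (0 : ℝ) else T / (d : ℝ)) 0 = 0 ∧
      lpObj d η (fun k => if k = 0 then 0 else T / (d : ℝ)) =
        (T / 2) * (1 - 2 * η / ((d : ℝ) * ((d : ℝ) + 1))) ∧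
      ∀ x, lpFeas d T η x → x 0 = 0 →
        lpObj d η x ≤ (T / 2) * (1 - 2 * η / ((d : ℝ) * ((d : ℝ) + 1))) := by
  have hd0 : d ≠ 0 := Nat.one_le_iff_ne_zero.mp hd
  exact ⟨lpFeas_firstZeroPoint hd0 hT.le hη0.le, if_pos rfl, lpObj_firstZeroPoint hd0 η,
    fun x hx hx0 => lpObj_le_of_first_eq_zero hd0 hη1 hx.2.1 hx.2.2 hx0⟩
end
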